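/- For every locally eventually constant sequence (g_n)_n ∈ 𝒢, the stabilization (ω_n)_n = ←(g_n)_n belongs to Ω and satisfies ω'_n = g_n for all n. Consequently, stabilization (g_n)_n ↦ ←(g_n)_n from 𝒢 to ←𝒢 and termwise reduction (ω_n)_n ↦ (ω'_n)_n from ←𝒢 to 𝒢 are mutually inverse bijections. -/

import Mathlib

open Classical
noncomputable section

namespace GCG

/-- One-step backtrack reduction of a word: replace some substring `u v u` by `u`. -/
def ReduceStep {V : Type*} (l r : List V) : Prop :=
  ∃ (p s : List V) (u v : V), l = p ++ [u, v, u] ++ s ∧ r = p ++ [u] ++ s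

/-- A word is reduced if it admits no one-step reduction. -/
def IsReduced {V : Type*} (l : List V) : Prop := ∀ r, ¬ ReduceStep l r

/-- The reduction `ω'` of a word: the (for words in a simple graph, unique) reduced
word obtained from it by repeatedly replacing substrings `u v u` by `u`. -/
def reduce {V : Type*} (l : List V) : List V :=
  if h : ∃ r, Relation.ReflTransGen ReduceStep l r ∧ IsReduced r then h.choose else l

/-- Compress every maximal constant substring `u u ⋯ u` to the single letter `u`. -/
def compress {V : Type*} : List V → List V
  | [] => []
  | [a] => [a]
  | a :: b :: t => if a = b then compress (b :: t) else a :: compress (b :: t)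

/-- Delete–Replace–Compress along `f`: delete the letters sent into `S`
(the subdivision points), replace the remaining letters by their images,
and compress maximal constant substrings. -/
def DRC {V' V S : Type*} (f : V' → V ⊕ S) (w : List V') : List V :=
  compress (w.filterMap fun v => (f v).getLeft?)

/-- A word in a simple graph: a finite list of vertices in which consecutive
letters are distinct and joined by an edge. -/
def IsWord {V : Type*} (G : SimpleGraph V) (l : List V) : Prop := l.Chain' G.Adj

/-- A loop word at `x`: a word that starts and ends with `x`. -/
def IsLoopWord {V : Type*} (G : SimpleGraph V) (x : V) (l : List V) : Prop :=
  l.Chain' G.Adj ∧ l.head? = some x ∧ l.getLast? = some x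

/-- Concatenation of loop words: the duplicated base letter is dropped. -/
def lconcat {V : Type*} (ω ξ : List V) : List V := ω.dropLast ++ ξ

/-- `Gs` (on vertex set `V ⊕ S`) is the subdivision of `G` in which every edge is
evenly subdivided into `d` edges: every edge of `G` is replaced by a path of
length `d` through fresh interior vertices from `S`, these paths are compatible
with edge reversal, their interiors are pairwise disjoint, they exhaust `S`, and
their steps are exactly the edges of `Gs`. -/
def IsEvenSubdivision {V S : Type*} (G : SimpleGraph V) (d : ℕ)
    (Gs : SimpleGraph (V ⊕ S)) : Prop :=
  ∃ P : G.Dart → Fin (d + 1) → V ⊕ S,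
    (∀ e, P e 0 = Sum.inl e.toProd.1) ∧
    (∀ e, P e (Fin.last d) = Sum.inl e.toProd.2) ∧
    (∀ e (i : Fin (d + 1)), 0 < i.val → i.val < d → ∃ s : S, P e i = Sum.inr s) ∧
    (∀ e, Function.Injective (P e)) ∧
    (∀ e (i : Fin (d + 1)), P e.symm i = P e i.rev) ∧
    (∀ s : S, ∃ e i, P e i = Sum.inr s) ∧
    (∀ e e' (i i' : Fin (d + 1)), 0 < i.val → i.val < d → P e i = P e' i' →
      (e' = e ∧ i' = i) ∨ (e' = e.symm ∧ i' = i.rev)) ∧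
    (∀ a b, Gs.Adj a b ↔ ∃ e, ∃ i : Fin d, P e i.castSucc = a ∧ P e i.succ = b)

/-- The inverse sequence of finite connected simple graphs `X_n` with even
subdivisions `X*_n` and simplicial bonding surjections `f_n : X_{n+1} → X*_n`
mapping every edge onto an edge, together with coherent base vertices `x_n`. -/
structure GraphTower where
  V : ℕ → Type
  S : ℕ → Type
  finV : ∀ n, Finite (V n)
  G : ∀ n, SimpleGraph (V n)
  conn : ∀ n, (G n).Connected
  d : ℕ → ℕ
  two_le_d : ∀ n, 2 ≤ d n
  Gs : ∀ n, SimpleGraph (V n ⊕ S n)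
  subdiv : ∀ n, IsEvenSubdivision (G n) (d n) (Gs n)
  f : ∀ n, V (n + 1) → V n ⊕ S n
  f_surj : ∀ n, Function.Surjective (f n)
  f_simplicial : ∀ n ⦃u v⦄, (G (n + 1)).Adj u v → (Gs n).Adj (f n u) (f n v)
  f_edge_surj : ∀ n ⦃a b⦄, (Gs n).Adj a b →
    ∃ u v, (G (n + 1)).Adj u v ∧ f n u = a ∧ f n v = b
  x : ∀ n, V n
  f_base : ∀ n, f n (x (n + 1)) = Sum.inl (x n)

namespace GraphTower

/-- The projection `φ_n = DRC_n`. -/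
def phi (T : GraphTower) (n : ℕ) : List (T.V (n + 1)) → List (T.V n) := DRC (T.f n)

/-- The composite projection `φ_n ∘ φ_{n+1} ∘ ⋯ ∘ φ_{n+m-1}` (the identity for `m = 0`). -/
def proj (T : GraphTower) (n : ℕ) : (m : ℕ) → List (T.V (n + m)) → List (T.V n)
  | 0, w => w
  | m + 1, w => T.proj n m (T.phi (n + m) w)

/-- Membership in `Ω = lim←(Ω_n, φ_n)`: a coherent sequence of loop words. -/
def MemOmega (T : GraphTower) (ω : ∀ n, List (T.V n)) : Prop :=
  (∀ n, IsLoopWord (T.G n) (T.x n) (ω n)) ∧ ∀ n, T.phi n (ω (n + 1)) = ω n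

/-- Membership in `G = lim←(Ω'_n, φ'_n)`: a `φ'`-coherent sequence of reduced loop words. -/
def MemG (T : GraphTower) (g : ∀ n, List (T.V n)) : Prop :=
  (∀ n, IsLoopWord (T.G n) (T.x n) (g n) ∧ IsReduced (g n)) ∧
    ∀ n, reduce (T.phi n (g (n + 1))) = g n

/-- A sequence is locally eventually constant if for every fixed level `n` the
unreduced projections of its later terms to level `n` are eventually constant. -/
def LEC (T : GraphTower) (g : ∀ n, List (T.V n)) : Prop :=
  ∀ n, ∃ M, ∀ m, M ≤ m → T.proj n m (g (n + m)) = T.proj n M (g (n + M))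

/-- `ω` is the stabilization `←g` of `g`: for every level `n`, the projections of
the later terms of `g` to level `n` eventually equal `ω n`. -/
def IsStabilization (T : GraphTower) (g ω : ∀ n, List (T.V n)) : Prop :=
  ∀ n, ∃ M, ∀ m, M ≤ m → T.proj n m (g (n + m)) = ω n

/-- The identity word sequence `(x_n)_n`. -/
def seqOne (T : GraphTower) : ∀ n, List (T.V n) := fun n => [T.x n]

/-- Termwise concatenation followed by termwise reduction. -/
def seqMul (T : GraphTower) (g h : ∀ n, List (T.V n)) : ∀ n, List (T.V n) :=
  fun n => reduce (lconcat (g n) (h n))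

/-- Termwise reversal. -/
def seqInv (T : GraphTower) (g : ∀ n, List (T.V n)) : ∀ n, List (T.V n) :=
  fun n => (g n).reverse

/-- Membership in `←𝒢`: the stabilization of some locally eventually constant
element of `G`. -/
def MemSG (T : GraphTower) (ω : ∀ n, List (T.V n)) : Prop :=
  ∃ g, T.MemG g ∧ T.LEC g ∧ T.IsStabilization g ω

/-- `τ = ω ∗ ξ`: termwise concatenation, followed by termwise reduction,
followed by stabilization. -/
def star (T : GraphTower) (ω ξ τ : ∀ n, List (T.V n)) : Prop :=
  T.IsStabilization (fun n => reduce (lconcat (ω n) (ξ n))) τ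

end GraphTower

end GCG

/-!
Reduction of words is well defined: cancelling backtracks `u v u ↦ u` is confluent, as a stack
machine that cancels backtracks as it reads a word computes a normal form invariant under each
cancellation. The heart of the proof is that `φ_n` commutes with reduction up to reduction,
`(φ_n ω)' = (φ_n ω')'` for loop words `ω`: a backtrack `u v u` at level `n + 1` is sent to a
stutter, to nothing, or — when `f_n u` is a subdivision point of an edge `b b'` with `f_n v = b` —
to an inserted letter `b` whose neighbours among the surviving letters are `b` or `b'`, because a
walk in `X*_n` that enters the interior of an edge leaves it through an endpoint. Iterating,
every projection of `g_{n+m}` to level `n` reduces to `g_n`; the stabilization `ω_n` is such a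
projection, and coherence of `ω` is inherited from the projections. Finally `(ω'_n)_n = (g_n)_n`
stabilizes to `ω` again.
-/

namespace GCG

open Relation

section Compress

variable {V : Type*}

theorem compress_cons_cons (a b : V) (t : List V) :
    compress (a :: b :: t) = if a = b then compress (b :: t) else a :: compress (b :: t) := rfl

theorem head?_compress (l : List V) : (compress l).head? = l.head? := by
  induction l with
  | nil => rfl
  | cons a t ih =>
    rcases t with _ | ⟨b, t⟩
    · rfl
    · rw [compress_cons_cons]
      split_ifs with hab
      · rw [ih, hab]; rfl
      · rfl

theorem compress_ne_nil {l : List V} (h : l ≠ []) : compress l ≠ [] := by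
  intro hc
  have := head?_compress l
  rw [hc] at this
  exact h (List.head?_eq_none_iff.mp this.symm)

theorem getLast?_compress (l : List V) : (compress l).getLast? = l.getLast? := by
  induction l with
  | nil => rfl
  | cons a t ih =>
    rcases t with _ | ⟨b, t⟩
    · rfl
    · rw [compress_cons_cons]
      split_ifs
      · rw [ih]; rfl
      · rw [List.getLast?_cons_cons, ← ih]
        obtain ⟨c, u, hcu⟩ := List.exists_cons_of_ne_nil (compress_ne_nil (List.cons_ne_nil b t))
        rw [hcu]
        simp

theorem compress_cons_eq_cons_tail (y : V) (Y : List V) :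
    compress (y :: Y) = y :: (compress (y :: Y)).tail :=
  (List.cons_head?_tail (by rw [head?_compress]; rfl)).symm

theorem compress_append_cons_cons (X Y : List V) (a : V) :
    compress (X ++ a :: a :: Y) = compress (X ++ a :: Y) := by
  induction X with
  | nil => simp [compress_cons_cons]
  | cons x X ih =>
    rcases X with _ | ⟨x', X⟩
    · simp only [List.nil_append, List.cons_append, compress_cons_cons] at *
      rw [ih]
    · simp only [List.cons_append, compress_cons_cons] at *
      rw [ih]

theorem compress_append_cons (X Y : List V) (y : V) :
    compress (X ++ y :: Y) = compress (X ++ [y]) ++ (compress (y :: Y)).tail := by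
  induction X with
  | nil => exact compress_cons_eq_cons_tail y Y
  | cons x X ih =>
    rcases X with _ | ⟨x', X⟩
    · simp only [List.nil_append, List.cons_append, compress_cons_cons]
      split_ifs with hxy
      · rw [← hxy]; exact compress_cons_eq_cons_tail x Y
      · rw [compress_cons_eq_cons_tail y Y]; rfl
    · simp only [List.cons_append, compress_cons_cons] at *
      rw [ih]
      split_ifs <;> rfl

theorem isChain_compress {R : V → V → Prop} {l : List V}
    (h : l.IsChain fun a b => a = b ∨ R a b) : (compress l).IsChain R := by
  induction l with
  | nil => exact List.IsChain.nil
  | cons a t ih =>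
    rcases t with _ | ⟨b, t⟩
    · exact List.IsChain.singleton a
    · rw [List.isChain_cons_cons] at h
      rw [compress_cons_cons]
      split_ifs with hab
      · exact ih h.2
      · refine List.isChain_cons.mpr ⟨fun c hc => ?_, ih h.2⟩
        rw [head?_compress, List.head?_cons, Option.mem_some_iff] at hc
        exact hc ▸ h.1.resolve_left hab

theorem reduceStep_compress (X Y : List V) {u v : V} (h : u ≠ v) :
    ReduceStep (compress (X ++ [u, v, u] ++ Y)) (compress (X ++ [u] ++ Y)) := by
  simp only [List.append_assoc, List.cons_append, List.nil_append]
  rw [compress_append_cons X (v :: u :: Y), compress_append_cons X Y,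
    compress_cons_cons, if_neg h, compress_cons_cons, if_neg (Ne.symm h)]
  obtain ⟨D, hD⟩ : ∃ D, compress (X ++ [u]) = D ++ [u] :=
    List.getLast?_eq_some_iff.mp (by rw [getLast?_compress, List.getLast?_concat])
  rw [hD, compress_cons_eq_cons_tail u Y]
  exact ⟨D, (compress (u :: Y)).tail, u, v, by simp, by simp⟩

end Compress

section Reduce

variable {V : Type*}

theorem isReduced_iff {l : List V} :
    IsReduced l ↔ ∀ (p s : List V) (u v : V), l ≠ p ++ [u, v, u] ++ s :=
  ⟨fun h p s u v hl => h _ ⟨p, s, u, v, hl, rfl⟩, fun h _ ⟨p, s, u, v, hl, _⟩ => h p s u v hl⟩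

theorem IsReduced.infix {l l' : List V} (h : IsReduced l) (hl : l' <:+: l) : IsReduced l' := by
  rw [isReduced_iff] at h ⊢
  rintro p s u v rfl
  obtain ⟨q, r, rfl⟩ := hl
  exact h (q ++ p) (s ++ r) u v (by simp)

theorem isReduced_of_length_lt {l : List V} (hl : l.length < 3) : IsReduced l := by
  rw [isReduced_iff]
  rintro p s u v rfl
  simp at hl
  omega

theorem isReduced_cons_cons_cons {a b c : V} {l : List V} :
    IsReduced (a :: b :: c :: l) ↔ a ≠ c ∧ IsReduced (b :: c :: l) := by
  refine ⟨fun h => ⟨?_, h.infix (List.suffix_cons _ _).isInfix⟩, fun ⟨hac, h⟩ => ?_⟩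
  · rintro rfl
    exact isReduced_iff.mp h [] l a b rfl
  · rw [isReduced_iff] at h ⊢
    rintro (_ | ⟨q, p⟩) s u v hl <;> simp at hl
    · exact hac (hl.1.trans hl.2.2.1.symm)
    · exact h p s u v (by simpa using hl.2)

theorem IsReduced.reverse {l : List V} (h : IsReduced l) : IsReduced l.reverse := by
  rw [isReduced_iff] at h ⊢
  intro p s u v hl
  exact h s.reverse p.reverse u v (by simpa using congrArg List.reverse hl)

/-- A stack holds a word in reverse order; pushing `c` onto `y :: x :: r` with `c = x`
cancels the backtrack `x y x`. -/
def pushCancel : List V → V → List V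
  | y :: x :: r, c => if c = x then x :: r else c :: y :: x :: r
  | σ, c => c :: σ

theorem pushCancel_cons_cons (y x : V) (r : List V) (c : V) :
    pushCancel (y :: x :: r) c = if c = x then x :: r else c :: y :: x :: r := rfl

theorem isReduced_pushCancel {σ : List V} (h : IsReduced σ) (c : V) :
    IsReduced (pushCancel σ c) := by
  match σ with
  | [] => exact isReduced_of_length_lt (by simp [pushCancel])
  | [a] => exact isReduced_of_length_lt (by simp [pushCancel])
  | y :: x :: r =>
    rw [pushCancel_cons_cons]
    split_ifs with hcx
    · exact h.infix (List.suffix_cons _ _).isInfix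
    · exact isReduced_cons_cons_cons.mpr ⟨hcx, h⟩

theorem exists_pushCancel_eq_cons (σ : List V) (c : V) : ∃ ρ, pushCancel σ c = c :: ρ := by
  match σ with
  | [] => exact ⟨[], rfl⟩
  | [a] => exact ⟨[a], rfl⟩
  | y :: x :: r =>
    rw [pushCancel_cons_cons]
    split_ifs with hcx
    · exact ⟨r, by rw [hcx]⟩
    · exact ⟨_, rfl⟩

theorem pushCancel_of_isReduced {σ : List V} {c : V} (h : IsReduced (c :: σ)) :
    pushCancel σ c = c :: σ := by
  match σ with
  | [] => rfl
  | [a] => rfl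
  | y :: x :: r => rw [pushCancel_cons_cons, if_neg (isReduced_cons_cons_cons.mp h).1]

theorem pushCancel_backtrack {σ : List V} (h : IsReduced σ) (u v : V) :
    pushCancel (pushCancel (pushCancel σ u) v) u = pushCancel σ u := by
  obtain ⟨ρ, hρ⟩ := exists_pushCancel_eq_cons σ u
  have hred : IsReduced (u :: ρ) := hρ ▸ isReduced_pushCancel h u
  rw [hρ]
  match ρ with
  | [] => simp [pushCancel]
  | [x] =>
    rw [pushCancel_cons_cons]
    split_ifs with hvx
    · subst hvx; rfl
    · rw [pushCancel_cons_cons, if_pos rfl]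
  | x :: w :: r =>
    rw [pushCancel_cons_cons]
    split_ifs with hvx
    · subst hvx
      exact pushCancel_of_isReduced hred
    · rw [pushCancel_cons_cons, if_pos rfl]

theorem reflTransGen_pushCancel (σ : List V) (c : V) (l : List V) :
    ReflTransGen ReduceStep (σ.reverse ++ c :: l) ((pushCancel σ c).reverse ++ l) := by
  match σ with
  | [] => simpa [pushCancel] using ReflTransGen.refl
  | [a] => simpa [pushCancel] using ReflTransGen.refl
  | y :: x :: r =>
    rw [pushCancel_cons_cons]
    split_ifs with hcx
    · subst hcx
      exact .single ⟨r.reverse, l, c, y, by simp, by simp⟩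
    · simpa using ReflTransGen.refl

theorem reflTransGen_foldl_pushCancel (l σ : List V) :
    ReflTransGen ReduceStep (σ.reverse ++ l) (l.foldl pushCancel σ).reverse := by
  induction l generalizing σ with
  | nil => simpa using ReflTransGen.refl
  | cons c l ih => exact (reflTransGen_pushCancel σ c l).trans (ih _)

theorem isReduced_foldl_pushCancel {σ : List V} (h : IsReduced σ) (l : List V) :
    IsReduced (l.foldl pushCancel σ) := by
  induction l generalizing σ with
  | nil => exact h
  | cons c l ih => exact ih (isReduced_pushCancel h c)

theorem foldl_pushCancel_of_isReduced {l σ : List V} (h : IsReduced (l.reverse ++ σ)) :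
    l.foldl pushCancel σ = l.reverse ++ σ := by
  induction l generalizing σ with
  | nil => rfl
  | cons c l ih =>
    have hc : IsReduced (c :: σ) := h.infix ⟨l.reverse, [], by simp⟩
    rw [List.foldl_cons, pushCancel_of_isReduced hc, ih (by simpa using h)]
    simp

def normalForm (l : List V) : List V := (l.foldl pushCancel []).reverse

theorem reflTransGen_normalForm (l : List V) : ReflTransGen ReduceStep l (normalForm l) := by
  simpa [normalForm] using reflTransGen_foldl_pushCancel l []

theorem isReduced_normalForm (l : List V) : IsReduced (normalForm l) :=
  (isReduced_foldl_pushCancel (isReduced_of_length_lt (by simp)) l).reverse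

theorem normalForm_of_isReduced {l : List V} (h : IsReduced l) : normalForm l = l := by
  rw [normalForm, foldl_pushCancel_of_isReduced (by simpa using h.reverse)]
  simp

theorem normalForm_eq_of_reduceStep {l r : List V} (h : ReduceStep l r) :
    normalForm l = normalForm r := by
  obtain ⟨p, s, u, v, rfl, rfl⟩ := h
  simp only [normalForm, List.foldl_append, List.foldl_cons, List.foldl_nil]
  rw [pushCancel_backtrack (isReduced_foldl_pushCancel (isReduced_of_length_lt (by simp)) p)]

theorem normalForm_eq_of_reflTransGen {l r : List V} (h : ReflTransGen ReduceStep l r) :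
    normalForm l = normalForm r := by
  induction h with
  | refl => rfl
  | tail _ hstep ih => exact ih.trans (normalForm_eq_of_reduceStep hstep)

theorem reduce_eq_normalForm (l : List V) : reduce l = normalForm l := by
  have hex : ∃ r, ReflTransGen ReduceStep l r ∧ IsReduced r :=
    ⟨_, reflTransGen_normalForm l, isReduced_normalForm l⟩
  unfold reduce
  rw [dif_pos hex, normalForm_eq_of_reflTransGen hex.choose_spec.1,
    normalForm_of_isReduced hex.choose_spec.2]

theorem reflTransGen_reduce (l : List V) : ReflTransGen ReduceStep l (reduce l) :=
  reduce_eq_normalForm l ▸ reflTransGen_normalForm l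

theorem reduce_of_isReduced {l : List V} (h : IsReduced l) : reduce l = l :=
  (reduce_eq_normalForm l).trans (normalForm_of_isReduced h)

theorem reduce_eq_of_reflTransGen {l r : List V} (h : ReflTransGen ReduceStep l r) :
    reduce l = reduce r := by
  rw [reduce_eq_normalForm, reduce_eq_normalForm, normalForm_eq_of_reflTransGen h]

theorem reduce_compress_append_cons {A C : List V} {b c c' : V} (hA : A.getLast? = some c)
    (hC : C.head? = some c') (h : c = b ∨ c' = b ∨ c = c') :
    reduce (compress (A ++ b :: C)) = reduce (compress (A ++ C)) := by
  obtain ⟨A, rfl⟩ := List.getLast?_eq_some_iff.mp hA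
  obtain ⟨C, rfl⟩ := List.head?_eq_some_iff.mp hC
  simp only [List.append_assoc, List.cons_append, List.nil_append]
  by_cases hcb : c = b
  · rw [hcb, compress_append_cons_cons]
  by_cases hcb' : c' = b
  · simpa [hcb'] using congrArg reduce (compress_append_cons_cons (A ++ [c]) C b)
  obtain rfl : c = c' := by tauto
  rw [compress_append_cons_cons]
  simpa using reduce_eq_of_reflTransGen (.single (reduceStep_compress A C hcb))

end Reduce

theorem IsLoopWord.of_reduceStep {V : Type*} {G : SimpleGraph V} {x : V} {w w' : List V}
    (h : IsLoopWord G x w) (hs : ReduceStep w w') : IsLoopWord G x w' := by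
  obtain ⟨p, s, u, v, rfl, rfl⟩ := hs
  obtain ⟨hch, hhead, hlast⟩ := h
  replace hch : List.IsChain G.Adj _ := hch
  refine ⟨(?_ : List.IsChain G.Adj _), by simpa using hhead, by simpa using hlast⟩
  simp only [List.append_assoc, List.cons_append, List.nil_append] at hch ⊢
  rw [List.isChain_append] at hch ⊢
  exact ⟨hch.1, (hch.2.1.tail).tail, fun a ha b hb => hch.2.2 a ha b (by simpa using hb)⟩

theorem IsLoopWord.of_reflTransGen {V : Type*} {G : SimpleGraph V} {x : V} {w w' : List V}
    (h : IsLoopWord G x w) (hs : ReflTransGen ReduceStep w w') : IsLoopWord G x w' := by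
  induction hs with
  | refl => exact h
  | tail _ hstep ih => exact ih.of_reduceStep hstep

section Subdivision

variable {V S : Type*} {G : SimpleGraph V} {d : ℕ} {Gs : SimpleGraph (V ⊕ S)}

/-- A witness of `IsEvenSubdivision`: `path e` is the path in `Gs` replacing the dart `e`. -/
structure SubdivisionPaths (G : SimpleGraph V) (d : ℕ) (Gs : SimpleGraph (V ⊕ S)) where
  path : G.Dart → Fin (d + 1) → V ⊕ S
  path_zero : ∀ e, path e 0 = Sum.inl e.toProd.1
  path_last : ∀ e, path e (Fin.last d) = Sum.inl e.toProd.2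
  path_interior : ∀ e (i : Fin (d + 1)), 0 < i.val → i.val < d → ∃ s : S, path e i = Sum.inr s
  path_symm : ∀ e (i : Fin (d + 1)), path e.symm i = path e i.rev
  path_interior_unique : ∀ e e' (i i' : Fin (d + 1)), 0 < i.val → i.val < d →
    path e i = path e' i' → (e' = e ∧ i' = i) ∨ (e' = e.symm ∧ i' = i.rev)
  adj_iff : ∀ a b, Gs.Adj a b ↔ ∃ e, ∃ i : Fin d, path e i.castSucc = a ∧ path e i.succ = b

def IsEvenSubdivision.paths (h : IsEvenSubdivision G d Gs) : SubdivisionPaths G d Gs :=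
  ⟨h.choose, h.choose_spec.1, h.choose_spec.2.1, h.choose_spec.2.2.1,
    h.choose_spec.2.2.2.2.1, h.choose_spec.2.2.2.2.2.2.1, h.choose_spec.2.2.2.2.2.2.2⟩

namespace SubdivisionPaths

variable (D : SubdivisionPaths G d Gs)

theorem exists_eq_path_of_adj_path {e : G.Dart} {j : Fin (d + 1)} {y : V ⊕ S}
    (hj0 : 0 < j.val) (hjd : j.val < d) (h : Gs.Adj (D.path e j) y) :
    ∃ j' : Fin (d + 1), (j'.val + 1 = j.val ∨ j'.val = j.val + 1) ∧ y = D.path e j' := by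
  obtain ⟨e', i, h1, h2⟩ := (D.adj_iff _ _).mp h
  rcases D.path_interior_unique e e' j i.castSucc hj0 hjd h1.symm with ⟨rfl, hi⟩ | ⟨rfl, hi⟩
  · refine ⟨i.succ, Or.inr ?_, h2.symm⟩
    simpa using congrArg Fin.val hi
  · refine ⟨i.succ.rev, Or.inl ?_, by rw [← h2, D.path_symm]⟩
    have := congrArg Fin.val hi
    simp only [Fin.val_rev, Fin.val_castSucc, Fin.val_succ] at this ⊢
    omega

theorem head_filterMap_getLeft_of_isChain (l : List (V ⊕ S)) :
    ∀ (e : G.Dart) (j : Fin (d + 1)), 0 < j.val → j.val < d →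
      (D.path e j :: l).IsChain Gs.Adj →
      ∀ c ∈ (l.filterMap Sum.getLeft?).head?, c = e.toProd.1 ∨ c = e.toProd.2 := by
  induction l with
  | nil => simp
  | cons y l ih =>
    intro e j hj0 hjd hch c hc
    obtain ⟨j', hj', rfl⟩ :=
      D.exists_eq_path_of_adj_path hj0 hjd (List.isChain_cons_cons.mp hch).1
    by_cases h0 : j'.val = 0
    · rw [show j' = 0 from Fin.ext h0, D.path_zero] at hc
      simp_all
    by_cases hd : j'.val = d
    · rw [show j' = Fin.last d from Fin.ext hd, D.path_last] at hc
      simp_all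
    obtain ⟨s, hs⟩ := D.path_interior e j' (by omega) (by omega)
    exact ih e j' (by omega) (by omega) (List.isChain_cons_cons.mp hch).2 c
      (by simpa only [hs, List.filterMap_cons, Sum.getLeft?_inr] using hc)

theorem exists_eq_path_succ_of_adj_inl {a : V} {y : V ⊕ S} (h : Gs.Adj (Sum.inl a) y) :
    ∃ (e : G.Dart) (i : Fin d), i.val = 0 ∧ a = e.toProd.1 ∧ y = D.path e i.succ := by
  obtain ⟨e, i, h1, h2⟩ := (D.adj_iff _ _).mp h
  have hi : i.val = 0 := by
    by_contra hi
    obtain ⟨s, hs⟩ := D.path_interior e i.castSucc (by simp; omega) (by simp)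
    exact Sum.inr_ne_inl (hs.symm.trans h1)
  rw [show i.castSucc = 0 from Fin.ext (by simp [hi]), D.path_zero] at h1
  exact ⟨e, i, hi, (Sum.inl_injective h1).symm, h2.symm⟩

end SubdivisionPaths

namespace IsEvenSubdivision

theorem not_adj_inl_inl (h : IsEvenSubdivision G d Gs) (hd : 2 ≤ d) (a b : V) : ¬ Gs.Adj (Sum.inl a) (Sum.inl b) := by
  intro hab
  obtain ⟨e, i, hi, -, hb⟩ := h.paths.exists_eq_path_succ_of_adj_inl hab
  obtain ⟨s, hs⟩ := h.paths.path_interior e i.succ (by simp) (by simp [hi]; omega)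
  exact Sum.inl_ne_inr (hb.trans hs)

theorem exists_exit (h : IsEvenSubdivision G d Gs) {a : V} {t : S} (hat : Gs.Adj (Sum.inl a) (Sum.inr t)) :
    ∃ a', G.Adj a a' ∧ ∀ l, (Sum.inr t :: l).IsChain Gs.Adj →
      ∀ c ∈ (l.filterMap Sum.getLeft?).head?, c = a ∨ c = a' := by
  obtain ⟨e, i, hi, rfl, ht⟩ := h.paths.exists_eq_path_succ_of_adj_inl hat
  have hid : i.succ.val < d := by
    by_contra hid
    rw [show i.succ = Fin.last d from Fin.ext (by simp at hid ⊢; omega), h.paths.path_last] at ht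
    exact Sum.inr_ne_inl ht
  exact ⟨e.toProd.2, e.adj, fun l hl =>
    h.paths.head_filterMap_getLeft_of_isChain l e i.succ (by simp) hid (ht ▸ hl)⟩

theorem isChain_filterMap_getLeft (h : IsEvenSubdivision G d Gs) (hd : 2 ≤ d) {m : List (V ⊕ S)} (hm : m.IsChain Gs.Adj) :
    (m.filterMap Sum.getLeft?).IsChain fun a c => a = c ∨ G.Adj a c := by
  induction m with
  | nil => exact .nil
  | cons y m ih =>
    rcases y with a | t
    · simp only [List.filterMap_cons, Sum.getLeft?_inl]
      refine List.isChain_cons.mpr ⟨fun c hc => ?_, ih hm.tail⟩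
      rcases m with _ | ⟨y, m⟩
      · simp at hc
      obtain ⟨hay, hm⟩ := List.isChain_cons_cons.mp hm
      rcases y with b | t
      · exact absurd hay (h.not_adj_inl_inl hd a b)
      obtain ⟨a', haa', hexit⟩ := h.exists_exit hay
      rcases hexit m hm c (by simpa only [List.filterMap_cons, Sum.getLeft?_inr] using hc)
        with rfl | rfl
      · exact .inl rfl
      · exact .inr haa'
    · simpa only [List.filterMap_cons, Sum.getLeft?_inr] using ih hm.tail

end IsEvenSubdivision

end Subdivision

namespace GraphTower

variable (T : GraphTower)

def deleteReplace (n : ℕ) (w : List (T.V (n + 1))) : List (T.V n) :=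
  w.filterMap fun v => (T.f n v).getLeft?

theorem phi_eq_compress_deleteReplace (n : ℕ) (w : List (T.V (n + 1))) :
    T.phi n w = compress (T.deleteReplace n w) := rfl

theorem deleteReplace_eq (n : ℕ) (w : List (T.V (n + 1))) :
    T.deleteReplace n w = (w.map (T.f n)).filterMap Sum.getLeft? := by
  rw [deleteReplace, List.filterMap_map]; rfl

theorem deleteReplace_append (n : ℕ) (w w' : List (T.V (n + 1))) :
    T.deleteReplace n (w ++ w') = T.deleteReplace n w ++ T.deleteReplace n w' :=
  List.filterMap_append

theorem deleteReplace_ne_nil {n : ℕ} {w : List (T.V (n + 1))} (hx : T.x (n + 1) ∈ w) :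
    T.deleteReplace n w ≠ [] :=
  List.ne_nil_of_mem (List.mem_filterMap.mpr ⟨_, hx, by rw [T.f_base]; rfl⟩)

theorem isChain_map_f {n : ℕ} {w : List (T.V (n + 1))} (h : w.IsChain (T.G (n + 1)).Adj) :
    (w.map (T.f n)).IsChain (T.Gs n).Adj :=
  List.isChain_map_of_isChain _ (fun _ _ hab => T.f_simplicial n hab) h

theorem isLoopWord_phi {n : ℕ} {w : List (T.V (n + 1))}
    (h : IsLoopWord (T.G (n + 1)) (T.x (n + 1)) w) : IsLoopWord (T.G n) (T.x n) (T.phi n w) := by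
  obtain ⟨hch, hhead, hlast⟩ := h
  obtain ⟨t, rfl⟩ := List.head?_eq_some_iff.mp hhead
  obtain ⟨r, hr⟩ := List.getLast?_eq_some_iff.mp hlast
  refine ⟨?_, ?_, ?_⟩ <;> rw [phi_eq_compress_deleteReplace]
  · rw [deleteReplace_eq]
    exact isChain_compress
      ((T.subdiv n).isChain_filterMap_getLeft (T.two_le_d n) (T.isChain_map_f hch))
  · simp [head?_compress, deleteReplace, T.f_base]
  · rw [getLast?_compress, hr]
    simp [deleteReplace, T.f_base]

theorem isLoopWord_proj (n m : ℕ) {w : List (T.V (n + m))}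
    (h : IsLoopWord (T.G (n + m)) (T.x (n + m)) w) : IsLoopWord (T.G n) (T.x n) (T.proj n m w) := by
  induction m with
  | zero => exact h
  | succ m ih => exact ih (T.isLoopWord_phi h)

theorem reduce_compress_deleteReplace_backtrack {n : ℕ} {p s : List (T.V (n + 1))}
    {u v : T.V (n + 1)} {t : T.S n} {b : T.V n}
    (hw : IsLoopWord (T.G (n + 1)) (T.x (n + 1)) (p ++ [u, v, u] ++ s))
    (hfu : T.f n u = Sum.inr t) (hfv : T.f n v = Sum.inl b) :
    reduce (compress (T.deleteReplace n p ++ b :: T.deleteReplace n s)) =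
      reduce (compress (T.deleteReplace n p ++ T.deleteReplace n s)) := by
  -- `f u` lies inside an edge `b b'` of `X_n`, so the surviving letters `c`, `c'` next to
  -- `u v u` are `b` or `b'`: inserting `b` between them is a stutter or the backtrack `b' b b'`.
  obtain ⟨hch, hhead, hlast⟩ := hw
  replace hch : List.IsChain (T.G (n + 1)).Adj (p ++ [u, v, u] ++ s) := hch
  have hbt := T.f_simplicial n (List.isChain_cons_cons.mp (hch.infix (show [v, u] <:+: _ from ⟨p ++ [u], s, by simp⟩))).1
  rw [hfu, hfv] at hbt
  obtain ⟨b', -, hexit⟩ := (T.subdiv n).exists_exit hbt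
  have hu : u ≠ T.x (n + 1) := fun h => by simp [h, T.f_base] at hfu
  have hp : T.x (n + 1) ∈ p := by
    rcases p with _ | ⟨y, p⟩
    · simp at hhead
      exact absurd hhead hu
    · simp at hhead
      simp [hhead]
  have hs : T.x (n + 1) ∈ s := by
    by_cases hs : s = []
    · subst hs
      simp at hlast
      exact absurd hlast hu
    · exact List.mem_of_getLast? (by rwa [List.getLast?_append_of_ne_nil _ hs] at hlast)
  set c := (T.deleteReplace n p).getLast (T.deleteReplace_ne_nil hp)
  set c' := (T.deleteReplace n s).head (T.deleteReplace_ne_nil hs)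
  have hc : c = b ∨ c = b' := by
    refine hexit (p.map (T.f n)).reverse ?_ c ?_
    · have hpu := T.isChain_map_f (hch.infix (show p ++ [u] <:+: _ from ⟨[], [v, u] ++ s, by simp⟩))
      simpa [hfu] using List.isChain_reverse.mpr (hpu.imp fun _ _ hab => hab.symm)
    · rw [List.filterMap_reverse, List.head?_reverse, ← deleteReplace_eq]
      exact List.getLast?_eq_some_getLast _
  have hc' : c' = b ∨ c' = b' := by
    refine hexit (s.map (T.f n)) ?_ c' ?_
    · simpa [hfu] using T.isChain_map_f (hch.infix (show u :: s <:+: _ from ⟨p ++ [u, v], [], by simp⟩))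
    · rw [← deleteReplace_eq]
      exact List.head?_eq_some_head _
  refine reduce_compress_append_cons (List.getLast?_eq_some_getLast (T.deleteReplace_ne_nil hp))
    (List.head?_eq_some_head (T.deleteReplace_ne_nil hs)) ?_
  rcases hc with hc | hc <;> rcases hc' with hc' | hc' <;> simp [c, c', hc, hc']

theorem reduce_phi_eq_of_reduceStep {n : ℕ} {w w' : List (T.V (n + 1))}
    (hw : IsLoopWord (T.G (n + 1)) (T.x (n + 1)) w) (hs : ReduceStep w w') :
    reduce (T.phi n w) = reduce (T.phi n w') := by
  obtain ⟨p, s, u, v, rfl, rfl⟩ := hs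
  have huv : (T.G (n + 1)).Adj u v :=
    (List.isChain_cons_cons.mp (List.IsChain.infix hw.1 ⟨p, s, rfl⟩)).1
  have hfuv := T.f_simplicial n huv
  simp only [phi_eq_compress_deleteReplace, deleteReplace_append]
  rcases hfu : T.f n u with a | t <;> rcases hfv : T.f n v with b | t' <;> rw [hfu, hfv] at hfuv
  · exact absurd hfuv ((T.subdiv n).not_adj_inl_inl (T.two_le_d n) a b)
  · simpa [deleteReplace, hfu, hfv] using congrArg reduce (compress_append_cons_cons _ _ a)
  · simpa [deleteReplace, hfu, hfv] using T.reduce_compress_deleteReplace_backtrack hw hfu hfv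
  · simp [deleteReplace, hfu, hfv]

theorem reduce_phi_reduce {n : ℕ} {w : List (T.V (n + 1))}
    (hw : IsLoopWord (T.G (n + 1)) (T.x (n + 1)) w) :
    reduce (T.phi n (reduce w)) = reduce (T.phi n w) := by
  suffices ∀ w', ReflTransGen ReduceStep w w' → reduce (T.phi n w') = reduce (T.phi n w) from
    this _ (reflTransGen_reduce w)
  intro w' hw'
  induction hw' with
  | refl => rfl
  | tail hww' hstep ih =>
    exact (T.reduce_phi_eq_of_reduceStep (hw.of_reflTransGen hww') hstep).symm.trans ih

theorem MemG.reduce_proj {T : GraphTower} {g : ∀ n, List (T.V n)} (hg : T.MemG g) (n m : ℕ)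
    {w : List (T.V (n + m))} (hw : IsLoopWord (T.G (n + m)) (T.x (n + m)) w)
    (hwg : reduce w = g (n + m)) : reduce (T.proj n m w) = g n := by
  induction m with
  | zero => exact hwg
  | succ m ih =>
    refine ih (T.isLoopWord_phi hw) ?_
    rw [← T.reduce_phi_reduce (n := n + m) hw, hwg]
    exact hg.2 (n + m)

theorem phi_proj (g : ∀ n, List (T.V n)) (n m : ℕ) :
    T.phi n (T.proj (n + 1) m (g (n + 1 + m))) = T.proj n (m + 1) (g (n + (m + 1))) := by
  induction m generalizing g with
  | zero => rfl
  | succ m ih => exact ih fun k => T.phi k (g (k + 1))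

theorem exists_isStabilization {g : ∀ n, List (T.V n)} (hg : T.LEC g) :
    ∃ ω, T.IsStabilization g ω := by
  choose M hM using hg
  exact ⟨fun n => T.proj n (M n) (g (n + M n)), fun n => ⟨M n, hM n⟩⟩

theorem memOmega_of_isStabilization {g ω : ∀ n, List (T.V n)}
    (hg : ∀ n, IsLoopWord (T.G n) (T.x n) (g n)) (hst : T.IsStabilization g ω) :
    T.MemOmega ω := by
  refine ⟨fun n => ?_, fun n => ?_⟩
  · obtain ⟨M, hM⟩ := hst n
    exact hM M le_rfl ▸ T.isLoopWord_proj n M (hg (n + M))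
  · obtain ⟨M₀, hM₀⟩ := hst n
    obtain ⟨M₁, hM₁⟩ := hst (n + 1)
    rw [← hM₁ (max M₀ M₁) (le_max_right _ _), T.phi_proj, hM₀ _ (by omega)]

theorem reduce_eq_of_isStabilization {g ω : ∀ n, List (T.V n)} (hg : T.MemG g)
    (hst : T.IsStabilization g ω) (n : ℕ) : reduce (ω n) = g n := by
  obtain ⟨M, hM⟩ := hst n
  rw [← hM M le_rfl]
  exact hg.reduce_proj n M (hg.1 (n + M)).1 (reduce_of_isReduced (hg.1 (n + M)).2)

end GraphTower

/-- For every locally eventually constant `(g_n)_n ∈ 𝒢` the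
stabilization `←(g_n)_n` exists, belongs to `Ω`, and its termwise reduction is
`(g_n)_n` again; moreover, for every `ω ∈ ←𝒢`, the stabilization of the termwise
reduction of `ω` is `ω` itself.  Hence stabilization `𝒢 → ←𝒢` and termwise
reduction `←𝒢 → 𝒢` are mutually inverse bijections. -/
theorem statement_4 (T : GraphTower) :
    (∀ g, T.MemG g → T.LEC g → ∃ ω, T.IsStabilization g ω) ∧
    (∀ g, T.MemG g → T.LEC g → ∀ ω, T.IsStabilization g ω →
      T.MemOmega ω ∧ ∀ n, reduce (ω n) = g n) ∧
    (∀ ω, (∃ g, T.MemG g ∧ T.LEC g ∧ T.IsStabilization g ω) →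
      T.IsStabilization (fun n => reduce (ω n)) ω) := by
  refine ⟨fun g _ hlec => T.exists_isStabilization hlec, fun g hg _ ω hst => ?_,
    fun ω ⟨g, hg, _, hst⟩ => ?_⟩
  · exact ⟨T.memOmega_of_isStabilization (fun n => (hg.1 n).1) hst,
      T.reduce_eq_of_isStabilization hg hst⟩
  · rwa [funext (T.reduce_eq_of_isStabilization hg hst)]

end GCG
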